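/- arXiv:2311.05111 — 3 statements merged into one kernel-verified Lean document; each statement's English description precedes it below -/
import Mathlib

section
/- For real symmetric N×N matrices A and B with B invertible and A−B invertible, and any positive integer L, the block matrix Q = 1_{L×L} ⊗ B + I_L ⊗ (A − B) (where ⊗ denotes the Kronecker product and 1_{L×L} is the all-ones L×L matrix) is invertible with inverse Q^{-1} = − 1_{L×L} ⊗ [ (A−B) B^{-1} (A−B) + L (A−B) ]^{-1} + I_L ⊗ (A−B)^{-1}, provided (A−B)B^{-1}(A−B) + L(A−B) is invertible. -/
open Matrix Kronecker

/-- Block-matrix inversion formula for `Q = 1_{L×L} ⊗ B + I_L ⊗ (A − B)` used in the VASP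
derivation. -/
theorem vasp_block_inverse (N L : ℕ) (hL : 0 < L) (A B : Matrix (Fin N) (Fin N) ℝ)
    (hA : A.IsSymm) (hB : B.IsSymm) (hBinv : IsUnit B) (hABinv : IsUnit (A - B))
    (hM : IsUnit ((A - B) * B⁻¹ * (A - B) + (L : ℝ) • (A - B))) :
    let J : Matrix (Fin L) (Fin L) ℝ := Matrix.of fun _ _ => 1
    let Q : Matrix (Fin L × Fin N) (Fin L × Fin N) ℝ :=
      J ⊗ₖ B + (1 : Matrix (Fin L) (Fin L) ℝ) ⊗ₖ (A - B)
    let R : Matrix (Fin L × Fin N) (Fin L × Fin N) ℝ :=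
      - (J ⊗ₖ ((A - B) * B⁻¹ * (A - B) + (L : ℝ) • (A - B))⁻¹)
        + (1 : Matrix (Fin L) (Fin L) ℝ) ⊗ₖ (A - B)⁻¹
    Q * R = 1 ∧ R * Q = 1 := by
  intro J Q R
  set C : Matrix (Fin N) (Fin N) ℝ := A - B with hC
  set M : Matrix (Fin N) (Fin N) ℝ := C * B⁻¹ * C + (L : ℝ) • C with hMdef
  have hdB : IsUnit B.det := (Matrix.isUnit_iff_isUnit_det B).mp hBinv
  have hdC : IsUnit C.det := (Matrix.isUnit_iff_isUnit_det C).mp hABinv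
  have hdM : IsUnit M.det := (Matrix.isUnit_iff_isUnit_det M).mp hM
  have hBB : B * B⁻¹ = 1 := Matrix.mul_nonsing_inv B hdB
  have hBB' : B⁻¹ * B = 1 := Matrix.nonsing_inv_mul B hdB
  have hCC : C * C⁻¹ = 1 := Matrix.mul_nonsing_inv C hdC
  have hCC' : C⁻¹ * C = 1 := Matrix.nonsing_inv_mul C hdC
  have hMM : M * M⁻¹ = 1 := Matrix.mul_nonsing_inv M hdM
  have hMM' : M⁻¹ * M = 1 := Matrix.nonsing_inv_mul M hdM
  -- key identities
  have key1 : C * M⁻¹ + (L : ℝ) • (B * M⁻¹) = B * C⁻¹ := by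
    have h : B * C⁻¹ * M = C + (L : ℝ) • B := by
      rw [hMdef]
      rw [Matrix.mul_add, Matrix.mul_smul]
      have h1 : B * C⁻¹ * (C * B⁻¹ * C) = C := by
        calc B * C⁻¹ * (C * B⁻¹ * C) = B * (C⁻¹ * C) * (B⁻¹ * C) := by
              noncomm_ring
          _ = C := by rw [hCC', Matrix.mul_one, ← Matrix.mul_assoc, hBB, Matrix.one_mul]
      have h2 : B * C⁻¹ * C = B := by rw [Matrix.mul_assoc, hCC', Matrix.mul_one]
      rw [h1, h2]
    have := congrArg (· * M⁻¹) h
    simp only [Matrix.add_mul, Matrix.smul_mul, Matrix.mul_assoc, hMM,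
      Matrix.mul_one] at this
    exact this.symm
  have key2 : M⁻¹ * C + (L : ℝ) • (M⁻¹ * B) = C⁻¹ * B := by
    have h : M * (C⁻¹ * B) = C + (L : ℝ) • B := by
      rw [hMdef]
      rw [Matrix.add_mul, Matrix.smul_mul]
      have h1 : C * B⁻¹ * C * (C⁻¹ * B) = C := by
        calc C * B⁻¹ * C * (C⁻¹ * B) = C * B⁻¹ * (C * C⁻¹) * B := by
              noncomm_ring
          _ = C := by rw [hCC, Matrix.mul_one, Matrix.mul_assoc, hBB', Matrix.mul_one]
      have h2 : C * (C⁻¹ * B) = B := by rw [← Matrix.mul_assoc, hCC, Matrix.one_mul]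
      rw [h1, h2]
    have := congrArg (M⁻¹ * ·) h
    simp only [Matrix.mul_add, Matrix.mul_smul, ← Matrix.mul_assoc, hMM',
      Matrix.one_mul] at this
    exact this.symm
  have hJJ : J * J = (L : ℝ) • J := by
    ext i j
    simp [Matrix.mul_apply, J]
  constructor
  · show (J ⊗ₖ B + (1 : Matrix (Fin L) (Fin L) ℝ) ⊗ₖ C) *
      (- (J ⊗ₖ M⁻¹) + (1 : Matrix (Fin L) (Fin L) ℝ) ⊗ₖ C⁻¹) = 1
    simp only [Matrix.add_mul, Matrix.mul_add, Matrix.neg_mul, Matrix.mul_neg,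
      ← Matrix.mul_kronecker_mul, Matrix.one_mul, Matrix.mul_one, hJJ,
      Matrix.smul_kronecker, ← Matrix.kronecker_smul, hCC, Matrix.one_kronecker_one]
    rw [← key1, Matrix.kronecker_add]
    abel
  · show (- (J ⊗ₖ M⁻¹) + (1 : Matrix (Fin L) (Fin L) ℝ) ⊗ₖ C⁻¹) *
      (J ⊗ₖ B + (1 : Matrix (Fin L) (Fin L) ℝ) ⊗ₖ C) = 1
    simp only [Matrix.add_mul, Matrix.mul_add, Matrix.neg_mul, Matrix.mul_neg,
      ← Matrix.mul_kronecker_mul, Matrix.one_mul, Matrix.mul_one, hJJ,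
      Matrix.smul_kronecker, ← Matrix.kronecker_smul, hCC', Matrix.one_kronecker_one]
    rw [← key2, Matrix.kronecker_add]
    abel
end

section
/- Determinant of a 1RSB-structured matrix: for positive integers L dividing τ and reals F, χ, H, det( F·1_{τ×τ} + χ·I_τ + H·(I_{τ/L} ⊗ 1_{L×L}) ) = (χ + LH + τF) · (χ + LH)^{τ/L − 1} · χ^{τ − τ/L}. -/
/-!
Write the matrix as `M + F·𝟙𝟙ᵀ` with `M = χ·I + H·(I ⊗ 1_{L×L})`. Since `𝟙` is an eigenvector
of `M` with eigenvalue `χ + LH`, the rank-one update multiplies `det M` by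
`1 + τF/(χ + LH)`, and `det M = (χ^{L-1}(χ + LH))^{τ/L}` by the same argument applied to each
diagonal block `χ·I_L + H·1_{L×L}`. This proves the identity for `χ ∉ {0, -LH}`; both sides are
continuous in `χ`, so it holds everywhere.
-/

open Matrix
open scoped Kronecker

section RankOneUpdate

variable {n K : Type*} [Fintype n] [DecidableEq n] [Field K]

theorem det_add_vecMulVec_of_mulVec_eq_smul {M : Matrix n n K} {u v : n → K} {c : K}
    (hc : c ≠ 0) (hu : M *ᵥ u = c • u) :
    (M + vecMulVec u v).det = M.det * (1 + (v ⬝ᵥ u) / c) := by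
  -- `M (c·1 + u vᵀ) = c (M + u vᵀ)`, so `M` need not be invertible.
  have hfactor : M * (c • (1 + vecMulVec (c⁻¹ • u) v)) = c • (M + vecMulVec u v) := by
    rw [smul_add, smul_vecMulVec, smul_inv_smul₀ hc, mul_add, Matrix.mul_smul, mul_one,
      mul_vecMulVec, hu, smul_vecMulVec, smul_add]
  have hdet := congrArg det hfactor
  rw [det_mul, det_smul, det_smul, vecMulVec_eq Unit, det_one_add_replicateCol_mul_replicateRow,
    dotProduct_smul, smul_eq_mul] at hdet
  rw [div_eq_inv_mul]
  exact (mul_left_cancel₀ (pow_ne_zero _ hc) (by linear_combination hdet)).symm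

theorem det_smul_one_add_smul_allOnes [Nonempty n] {a : K} (b : K) (ha : a ≠ 0) :
    (a • (1 : Matrix n n K) + b • of fun _ _ => 1).det =
      a ^ (Fintype.card n - 1) * (a + Fintype.card n * b) := by
  have hJ : (b • of fun _ _ => 1 : Matrix n n K) = vecMulVec 1 (fun _ => b) := by
    ext; simp
  have hu : (a • (1 : Matrix n n K)) *ᵥ 1 = a • 1 := by rw [smul_mulVec, one_mulVec]
  rw [hJ, det_add_vecMulVec_of_mulVec_eq_smul ha hu, det_smul, det_one, mul_one]
  obtain ⟨N, hN⟩ : ∃ N, Fintype.card n = N + 1 := Nat.exists_eq_add_one.2 Fintype.card_pos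
  simp [hN, dotProduct]
  field_simp
  ring

end RankOneUpdate

section Kronecker

variable {m n R : Type*} [DecidableEq m] [DecidableEq n] [CommRing R]

theorem smul_one_add_smul_one_kronecker (a b : R) (B : Matrix n n R) :
    a • (1 : Matrix (m × n) (m × n) R) + b • ((1 : Matrix m m R) ⊗ₖ B) =
      (1 : Matrix m m R) ⊗ₖ (a • 1 + b • B) := by
  rw [kronecker_add, kronecker_smul, kronecker_smul, one_kronecker_one]

omit [DecidableEq n] in
theorem one_kronecker_allOnes_mulVec_one [Fintype m] [Fintype n] :
    ((1 : Matrix m m R) ⊗ₖ (of fun _ _ => 1 : Matrix n n R)) *ᵥ 1 = (Fintype.card n : R) • 1 := by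
  ext ⟨i, j⟩
  simp only [mulVec, dotProduct, Fintype.sum_prod_type, kronecker_apply, one_apply, of_apply]
  simp

end Kronecker

/-- The paper's `F·1_{τ×τ} + χ·I_τ + H·(I_{τ/L} ⊗ 1_{L×L})`, with `τ/L = |m|` and `L = |n|`. -/
def oneRSBMatrix {m n K : Type*} [DecidableEq m] [DecidableEq n] [Field K] (F χ H : K) :
    Matrix (m × n) (m × n) K :=
  F • of (fun _ _ => 1) + χ • 1 + H • ((1 : Matrix m m K) ⊗ₖ of fun _ _ => 1)

theorem det_oneRSBMatrix_of_ne_zero {m n K : Type*} [Fintype m] [Fintype n] [DecidableEq m]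
    [DecidableEq n] [Nonempty m] [Nonempty n] [Field K]
    (F : K) {χ H : K} (hχ : χ ≠ 0) (hχH : χ + Fintype.card n * H ≠ 0) :
    (oneRSBMatrix (m := m) (n := n) F χ H).det =
      (χ + Fintype.card n * H + ((Fintype.card m * Fintype.card n : ℕ) : K) * F) *
        (χ + Fintype.card n * H) ^ (Fintype.card m - 1) *
        χ ^ (Fintype.card m * Fintype.card n - Fintype.card m) := by
  set M : Matrix (m × n) (m × n) K := χ • 1 + H • ((1 : Matrix m m K) ⊗ₖ of fun _ _ => 1)
    with hMdef
  have hA : oneRSBMatrix F χ H = M + vecMulVec 1 (fun _ => F) := by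
    rw [oneRSBMatrix, add_assoc, add_comm]
    congr 1
    ext; simp
  have hM : M *ᵥ 1 = (χ + Fintype.card n * H) • 1 := by
    rw [add_mulVec, smul_mulVec, smul_mulVec, one_mulVec, one_kronecker_allOnes_mulVec_one,
      smul_smul, ← add_smul, mul_comm]
  have hdetM : M.det = (χ ^ (Fintype.card n - 1) * (χ + Fintype.card n * H)) ^ Fintype.card m := by
    rw [hMdef, smul_one_add_smul_one_kronecker, det_kronecker, det_one, one_pow, one_mul,
      det_smul_one_add_smul_allOnes H hχ]
  rw [hA, det_add_vecMulVec_of_mulVec_eq_smul hχH hM, hdetM]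
  obtain ⟨a, ha⟩ : ∃ a, Fintype.card m = a + 1 := Nat.exists_eq_add_one.2 Fintype.card_pos
  obtain ⟨b, hb⟩ : ∃ b, Fintype.card n = b + 1 := Nat.exists_eq_add_one.2 Fintype.card_pos
  have hexp : (a + 1) * (b + 1) - (a + 1) = b * (a + 1) := by
    rw [Nat.mul_succ, Nat.add_sub_cancel, Nat.mul_comm]
  simp only [dotProduct, Pi.one_apply, mul_one, Finset.sum_const, Finset.card_univ,
    Fintype.card_prod, ha, hb, hexp, nsmul_eq_mul, Nat.add_sub_cancel, mul_pow, ← pow_mul]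
  rw [hb] at hχH
  field_simp
  push_cast
  ring

/-- Determinant of a 1RSB-structured matrix (with `τ = k·L`):
`det(F·1 + χ·I + H·(I_{τ/L} ⊗ 1_{L×L})) = (χ+LH+τF)(χ+LH)^{τ/L−1} χ^{τ−τ/L}`. -/
theorem oneRSB_det (k L : ℕ) (hk : 0 < k) (hL : 0 < L) (F χ H : ℝ) :
    let J : Matrix (Fin k × Fin L) (Fin k × Fin L) ℝ := Matrix.of fun _ _ => 1
    let Bd : Matrix (Fin k × Fin L) (Fin k × Fin L) ℝ :=
      Matrix.of fun p q => if p.1 = q.1 then 1 else 0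
    let A : Matrix (Fin k × Fin L) (Fin k × Fin L) ℝ :=
      F • J + χ • (1 : Matrix (Fin k × Fin L) (Fin k × Fin L) ℝ) + H • Bd
    A.det =
      (χ + (L : ℝ) * H + ((k * L : ℕ) : ℝ) * F) *
        (χ + (L : ℝ) * H) ^ (k - 1) * χ ^ (k * L - k) := by
  intro J Bd A
  have : Nonempty (Fin k) := Fin.pos_iff_nonempty.1 hk
  have : Nonempty (Fin L) := Fin.pos_iff_nonempty.1 hL
  have hA : A = oneRSBMatrix F χ H := by
    ext p q
    simp [A, J, Bd, oneRSBMatrix, one_apply]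
  have hdet : (fun x : ℝ => (oneRSBMatrix (m := Fin k) (n := Fin L) F x H).det) = fun x =>
      (x + L * H + ((k * L : ℕ) : ℝ) * F) * (x + L * H) ^ (k - 1) * x ^ (k * L - k) := by
    refine Continuous.ext_on
      (Set.Countable.dense_compl ℝ ((Set.countable_singleton (-(L * H))).insert 0))
      (by unfold oneRSBMatrix; fun_prop) (by fun_prop) fun x hx => ?_
    simp only [Set.mem_compl_iff, Set.mem_insert_iff, Set.mem_singleton_iff, not_or] at hx
    have hxLH : x + Fintype.card (Fin L) * H ≠ 0 := by
      rw [Fintype.card_fin, Ne, ← eq_neg_iff_add_eq_zero]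
      exact hx.2
    simpa only [Fintype.card_fin] using det_oneRSBMatrix_of_ne_zero (m := Fin k) F hx.1 hxLH
  rw [hA]
  exact congrFun hdet χ
end

section
/- Inverse of a 1RSB-structured matrix: for positive integers L dividing τ and reals F, χ, H with χ ≠ 0, χ + LH ≠ 0, and χ + LH + τF ≠ 0, the matrix A = F·1_{τ×τ} + χ·I_τ + H·(I_{τ/L} ⊗ 1_{L×L}) is invertible and A^{-1} = F'·1_{τ×τ} + χ'·I_τ + H'·(I_{τ/L} ⊗ 1_{L×L}) for some reals F', χ', H' with χ' = 1/χ and χ' + L H' = 1/(χ + LH) and χ' + L H' + τ F' = 1/(χ + LH + τF). -/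
open Matrix

set_option maxHeartbeats 1000000

/-- Inverse of a 1RSB-structured matrix: the three-parameter algebra
`F·1 + χ·I + H·(I_{τ/L} ⊗ 1_{L×L})` (with `τ = k·L`) is closed under inversion, with the
eigenvalue-wise reciprocal parameters. -/
theorem oneRSB_inverse (k L : ℕ) (hk : 0 < k) (hL : 0 < L) (F χ H : ℝ)
    (hχ : χ ≠ 0) (hχH : χ + (L : ℝ) * H ≠ 0)
    (hχHF : χ + (L : ℝ) * H + ((k * L : ℕ) : ℝ) * F ≠ 0) :
    let J : Matrix (Fin k × Fin L) (Fin k × Fin L) ℝ := Matrix.of fun _ _ => 1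
    let Bd : Matrix (Fin k × Fin L) (Fin k × Fin L) ℝ :=
      Matrix.of fun p q => if p.1 = q.1 then 1 else 0
    let A : Matrix (Fin k × Fin L) (Fin k × Fin L) ℝ :=
      F • J + χ • (1 : Matrix (Fin k × Fin L) (Fin k × Fin L) ℝ) + H • Bd
    ∃ F' χ' H' : ℝ,
      χ' = 1 / χ ∧
      χ' + (L : ℝ) * H' = 1 / (χ + (L : ℝ) * H) ∧
      χ' + (L : ℝ) * H' + ((k * L : ℕ) : ℝ) * F' =
        1 / (χ + (L : ℝ) * H + ((k * L : ℕ) : ℝ) * F) ∧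
      A * (F' • J + χ' • (1 : Matrix (Fin k × Fin L) (Fin k × Fin L) ℝ) + H' • Bd) = 1 ∧
      (F' • J + χ' • (1 : Matrix (Fin k × Fin L) (Fin k × Fin L) ℝ) + H' • Bd) * A = 1 := by
  intro J Bd A
  simp only [Nat.cast_mul] at hχHF ⊢
  have hL' : (L : ℝ) ≠ 0 := Nat.cast_ne_zero.mpr hL.ne'
  have hk' : (k : ℝ) ≠ 0 := Nat.cast_ne_zero.mpr hk.ne'
  have hcard : ∀ a : Fin k,
      (Finset.filter (fun x : Fin k × Fin L => x.1 = a) Finset.univ).card = L := by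
    intro a
    rw [show Finset.filter (fun x : Fin k × Fin L => x.1 = a) Finset.univ
        = {a} ×ˢ Finset.univ from by
          ext x
          simp [Finset.mem_product]
          constructor
          · rintro rfl; exact ⟨x.2, rfl⟩
          · rintro ⟨b, rfl⟩; rfl]
    simp
  have hJJ : J * J = ((k : ℝ) * (L : ℝ)) • J := by
    ext p q
    simp [J, Matrix.mul_apply, Finset.card_univ, mul_comm]
  have hBB : Bd * Bd = (L : ℝ) • Bd := by
    ext p q
    simp [Bd, Matrix.mul_apply, Fintype.sum_prod_type, Finset.sum_ite_eq]
    split_ifs <;> simp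
  have hJB : J * Bd = (L : ℝ) • J := by
    ext p q
    simp [J, Bd, Matrix.mul_apply]
    exact hcard q.1
  have hcard' : ∀ a : Fin k,
      (Finset.filter (fun x : Fin k × Fin L => a = x.1) Finset.univ).card = L := by
    intro a
    rw [show (Finset.filter (fun x : Fin k × Fin L => a = x.1) Finset.univ)
        = Finset.filter (fun x : Fin k × Fin L => x.1 = a) Finset.univ from by
          apply Finset.filter_congr; intro x _; simp [eq_comm]]
    exact hcard a
  have hBJ : Bd * J = (L : ℝ) • J := by
    ext p q
    simp [J, Bd, Matrix.mul_apply]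
    exact hcard' p.1
  have key : ∀ a b c a' b' c' : ℝ,
      a * a' * ((k : ℝ) * (L : ℝ)) + a * b' + a * c' * (L : ℝ)
        + b * a' + c * a' * (L : ℝ) = 0 →
      b * b' = 1 →
      b * c' + c * b' + c * c' * (L : ℝ) = 0 →
      (a • J + b • (1 : Matrix (Fin k × Fin L) (Fin k × Fin L) ℝ) + c • Bd)
        * (a' • J + b' • (1 : Matrix (Fin k × Fin L) (Fin k × Fin L) ℝ) + c' • Bd) = 1 := by
    intro a b c a' b' c' h1 h2 h3
    rw [add_mul, add_mul, mul_add, mul_add, mul_add, mul_add, mul_add, mul_add]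
    simp only [Matrix.smul_mul, Matrix.mul_smul, hJJ, hBB, hJB, hBJ, one_mul, mul_one,
      smul_smul]
    match_scalars
    · linear_combination h1
    · linear_combination h2
    · linear_combination h3
  set b := χ + (L : ℝ) * H with hbdef
  set c := χ + (L : ℝ) * H + (k : ℝ) * (L : ℝ) * F with hcdef
  refine ⟨(1 / c - 1 / b) / ((k : ℝ) * (L : ℝ)), 1 / χ, (1 / b - 1 / χ) / (L : ℝ),
    rfl, ?_, ?_, ?_, ?_⟩
  · field_simp
    ring
  · field_simp
    ring
  · apply key
    · field_simp
      ring
    · field_simp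
    · field_simp
      ring
  · apply key
    · field_simp
      ring
    · field_simp
    · field_simp
      ring
end
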